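/- Let □ be a lattice polygon in ℝ² with lattice width q (attained in the vertical direction, i.e. the height of □ is q) and horizontal width q' ≥ q. Suppose □ satisfies d(□,(1,1)) ≥ q' and d(□,(1,-1)) ≥ q'. If □ is a quadrilateral whose four vertices lie respectively on the four supporting lines in directions (0,±1) and (±1,0), then the normalized area 2·Area(□) ≥ (3/4)q². -/

import Mathlib

open MeasureTheory

/-- The width of a planar set `K` in the integer direction `v`. -/
noncomputable def dirWidth (K : Set (ℝ × ℝ)) (v : ℤ × ℤ) : ℝ :=
  sSup ((fun p : ℝ × ℝ => v.1 * p.1 + v.2 * p.2) '' K) -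
    sInf ((fun p : ℝ × ℝ => v.1 * p.1 + v.2 * p.2) '' K)

/-- A primitive integer vector. -/
def IsPrimitiveVec (v : ℤ × ℤ) : Prop := Int.gcd v.1 v.2 = 1

/-!
Translate so that the bounding box of the quadrilateral is `[0, q'] × [0, q]`, with top vertex
`(A, q)`, bottom vertex `(B, 0)`, right vertex `(q', C)` and left vertex `(0, D)`. The shoelace
formula gives `2·Area = q q' - (B - A)(D - C)`. When the shear `(B - A)(D - C)` is positive, say
`A ≤ B` and `C ≤ D`, the `(1,1)`-width is spanned by the top or right vertex against the bottom or
left one, and `d(K,(1,1)) ≥ q'` then forces `B - A ≤ C, D - C ≤ q - C` or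
`B - A ≤ q - D, D - C ≤ D` (or a nonpositive shear), so the shear is at most `q²/4`; the case
`B ≤ A`, `D ≤ C` is its mirror image under `y ↦ -y`, which exchanges the two diagonal directions.
Hence `2·Area ≥ q q' - q²/4 ≥ 3q²/4`.
-/

open Set

def cross (u w : ℝ × ℝ) : ℝ := u.1 * w.2 - u.2 * w.1

lemma isLinearMap_cross (u : ℝ × ℝ) : IsLinearMap ℝ (cross u) where
  map_add x y := by simp only [cross, Prod.fst_add, Prod.snd_add]; ring
  map_smul c x := by simp only [cross, Prod.smul_fst, Prod.smul_snd, smul_eq_mul]; ring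

lemma cross_sub_right (u w z : ℝ × ℝ) : cross u (w - z) = cross u w - cross u z := by
  simp only [cross, Prod.fst_sub, Prod.snd_sub]; ring

lemma cross_swap (u w : ℝ × ℝ) : cross w u = -cross u w := by
  simp only [cross]; ring

lemma volume_setOf_cross_eq {u : ℝ × ℝ} (hu : u ≠ 0) (c : ℝ) :
    volume {z | cross u z = c} = 0 := by
  set L : ℝ × ℝ →ₗ[ℝ] ℝ := (isLinearMap_cross u).mk'
  set w : ℝ × ℝ := (-u.2, u.1)
  have hw : 0 < L w := by
    have : u.1 ≠ 0 ∨ u.2 ≠ 0 := by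
      by_contra! h; exact hu (Prod.ext h.1 h.2)
    have hLw : L w = u.1 ^ 2 + u.2 ^ 2 := by simp only [L, w, IsLinearMap.mk'_apply, cross]; ring
    rw [hLw]
    rcases this with h | h <;> positivity
  have hker : LinearMap.ker L ≠ ⊤ := fun h ↦
    hw.ne' (LinearMap.congr_fun (LinearMap.ker_eq_top.mp h) w)
  have hset : {z | cross u z = c} = (· + -(c / L w) • w) ⁻¹' LinearMap.ker L := by
    ext z
    rw [mem_preimage, SetLike.mem_coe, LinearMap.mem_ker, map_add, map_smul, smul_eq_mul,
      neg_mul, div_mul_cancel₀ _ hw.ne', add_neg_eq_zero]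
    rfl
  rw [hset, measure_preimage_add_right]
  exact Measure.addHaar_submodule volume _ hker

lemma ofReal_half_le_volume_stdTriangle :
    ENNReal.ofReal (1 / 2) ≤ volume (convexHull ℝ {((0 : ℝ), (0 : ℝ)), (1, 0), (0, 1)}) := by
  have hsub : regionBetween (fun _ ↦ 0) (fun x ↦ 1 - x) (Ioo 0 1) ⊆
      convexHull ℝ {((0 : ℝ), (0 : ℝ)), (1, 0), (0, 1)} := by
    rintro ⟨x, y⟩ ⟨⟨hx₀, -⟩, hy₀, hy₁⟩
    have hmem := (convex_convexHull ℝ {((0 : ℝ), (0 : ℝ)), (1, 0), (0, 1)}).sum_mem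
      (t := Finset.univ) (w := ![1 - x - y, x, y]) (z := ![(0, 0), (1, 0), (0, 1)])
      (fun i _ ↦ by fin_cases i <;> simp <;> linarith) (by simp [Fin.sum_univ_three]; ring)
      (fun i _ ↦ subset_convexHull ℝ _ (by fin_cases i <;> simp))
    simpa [Fin.sum_univ_three] using hmem
  have hint : IntegrableOn (fun x : ℝ ↦ 1 - x) (Ioo 0 1) :=
    (by fun_prop : Continuous fun x : ℝ ↦ 1 - x).integrableOn_Icc.mono_set Ioo_subset_Icc_self
  calc ENNReal.ofReal (1 / 2)
      = volume (regionBetween (fun _ ↦ 0) (fun x ↦ 1 - x) (Ioo (0 : ℝ) 1)) := by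
        rw [Measure.volume_eq_prod, volume_regionBetween_eq_integral (integrableOn_const (by simp))
          hint measurableSet_Ioo (fun x hx ↦ by linarith [hx.2]),
          integral_Ioc_eq_integral_Ioo.symm, ← intervalIntegral.integral_of_le zero_le_one]
        simp only [Pi.sub_apply, sub_zero]
        rw [intervalIntegral.integral_sub intervalIntegrable_const
          intervalIntegral.intervalIntegrable_id]
        norm_num
    _ ≤ _ := measure_mono hsub

lemma ofReal_cross_le_volume_triangle (p a b : ℝ × ℝ) :
    ENNReal.ofReal (cross (a - p) (b - p) / 2) ≤ volume (convexHull ℝ {p, a, b}) := by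
  set M : ℝ × ℝ →ₗ[ℝ] ℝ × ℝ := Matrix.toLin (Module.Basis.finTwoProd ℝ)
    (Module.Basis.finTwoProd ℝ) !![a.1 - p.1, b.1 - p.1; a.2 - p.2, b.2 - p.2]
  have hdet : LinearMap.det M = cross (a - p) (b - p) := by
    simp [M, LinearMap.det_toLin, Matrix.det_fin_two, cross, mul_comm]
  have himage : (· + p) '' (M '' convexHull ℝ {(0, 0), (1, 0), (0, 1)}) =
      convexHull ℝ {p, a, b} := by
    rw [← image_comp]
    convert (M.toAffineMap + AffineMap.const ℝ (ℝ × ℝ) p).image_convexHull _ using 2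
    · rfl
    · simp only [image_insert_eq, image_singleton, AffineMap.coe_add, LinearMap.coe_toAffineMap,
        AffineMap.coe_const, Pi.add_apply, Function.const_apply, M, Matrix.toLin_finTwoProd_apply]
      have hshift (u : ℝ × ℝ) : (u.1 - p.1, u.2 - p.2) + p = u := by ext <;> simp
      simp only [mul_zero, mul_one, add_zero, zero_add, Prod.mk_zero_zero, hshift]
  calc ENNReal.ofReal (cross (a - p) (b - p) / 2)
      ≤ ENNReal.ofReal |LinearMap.det M| * ENNReal.ofReal (1 / 2) := by
        rw [← ENNReal.ofReal_mul (abs_nonneg _), hdet, mul_one_div]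
        exact ENNReal.ofReal_le_ofReal (by linarith [le_abs_self (cross (a - p) (b - p))])
    _ ≤ ENNReal.ofReal |LinearMap.det M| * volume (convexHull ℝ {(0, 0), (1, 0), (0, 1)}) :=
        mul_le_mul_right ofReal_half_le_volume_stdTriangle _
    _ = volume (convexHull ℝ {p, a, b}) := by
        rw [← himage, image_add_right, measure_preimage_add_right, Measure.addHaar_image_linearMap]

lemma ofReal_cross_add_le_volume_union (p a b c : ℝ × ℝ) :
    ENNReal.ofReal (cross (a - p) (b - p) / 2) + ENNReal.ofReal (cross (b - p) (c - p) / 2) ≤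
      volume (convexHull ℝ {p, a, b} ∪ convexHull ℝ {p, b, c}) := by
  set T₁ := convexHull ℝ {p, a, b}
  set T₂ := convexHull ℝ {p, b, c}
  have h₁ := ofReal_cross_le_volume_triangle p a b
  have h₂ := ofReal_cross_le_volume_triangle p b c
  rcases le_or_gt (cross (a - p) (b - p)) 0 with hS₁ | hS₁
  · rw [ENNReal.ofReal_of_nonpos (by linarith), zero_add]
    exact h₂.trans (measure_mono subset_union_right)
  rcases le_or_gt (cross (b - p) (c - p)) 0 with hS₂ | hS₂
  · rw [ENNReal.ofReal_of_nonpos (by linarith : cross (b - p) (c - p) / 2 ≤ 0), add_zero]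
    exact h₁.trans (measure_mono subset_union_left)
  -- the common edge `[p, b]` spans a line separating the two triangles
  have hb : cross (b - p) b = cross (b - p) p := by
    rw [← sub_eq_zero, ← cross_sub_right]; simp only [cross]; ring
  have ha : cross (b - p) a < cross (b - p) p := by
    rw [← sub_neg, ← cross_sub_right, cross_swap]; linarith
  have hc : cross (b - p) p < cross (b - p) c := by
    rw [← sub_pos, ← cross_sub_right]; exact hS₂
  have hT₁ : T₁ ⊆ {z | cross (b - p) z ≤ cross (b - p) p} :=
    convexHull_min (by rintro z (rfl | rfl | rfl) <;> simp only [mem_ofPred_eq] <;> linarith)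
      (convex_halfSpace_le (isLinearMap_cross _) _)
  have hT₂ : T₂ ⊆ {z | cross (b - p) p ≤ cross (b - p) z} :=
    convexHull_min (by rintro z (rfl | rfl | rfl) <;> simp only [mem_ofPred_eq] <;> linarith)
      (convex_halfSpace_ge (isLinearMap_cross _) _)
  have hnull : volume (T₁ ∩ T₂) = 0 := by
    refine measure_mono_null (fun z hz ↦ le_antisymm (hT₁ hz.1) (hT₂ hz.2))
      (volume_setOf_cross_eq (fun h ↦ ?_) _)
    simp [h, cross] at hS₂
  calc _ ≤ volume T₁ + volume T₂ := add_le_add h₁ h₂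
    _ = volume (T₁ ∪ T₂) := by
      rw [← measure_union_add_inter _ ((toFinite _).isCompact_convexHull ℝ).measurableSet, hnull,
        add_zero]

lemma cross_add_cross_le_two_mul_volume_convexHull (v₁ v₂ v₃ v₄ : ℝ × ℝ) :
    cross (v₂ - v₄) (v₃ - v₄) + cross (v₃ - v₄) (v₁ - v₄) ≤
      2 * (volume (convexHull ℝ {v₁, v₂, v₃, v₄})).toReal := by
  have hsub : convexHull ℝ {v₄, v₂, v₃} ∪ convexHull ℝ {v₄, v₃, v₁} ⊆
      convexHull ℝ {v₁, v₂, v₃, v₄} :=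
    union_subset (convexHull_mono (by simp [insert_subset_iff]))
      (convexHull_mono (by simp [insert_subset_iff]))
  have hfin : volume (convexHull ℝ {v₁, v₂, v₃, v₄}) ≠ ⊤ :=
    ((toFinite _).isCompact_convexHull ℝ).measure_lt_top.ne
  have h := (ENNReal.ofReal_add_le.trans (ofReal_cross_add_le_volume_union v₄ v₂ v₃ v₁)).trans
    (measure_mono hsub)
  rw [ENNReal.ofReal_le_iff_le_toReal hfin] at h
  linarith

lemma sSup_sub_sInf_image_convexHull_le {E : Type*} [AddCommGroup E] [Module ℝ E] {s : Set E}
    (hs : s.Nonempty) {f : E → ℝ} (hf : IsLinearMap ℝ f) {m M : ℝ}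
    (h : ∀ v ∈ s, m ≤ f v ∧ f v ≤ M) :
    sSup (f '' convexHull ℝ s) - sInf (f '' convexHull ℝ s) ≤ M - m := by
  have hne := (hs.mono (subset_convexHull ℝ s)).image f
  have hsup : sSup (f '' convexHull ℝ s) ≤ M := csSup_le hne <| forall_mem_image.2 fun _ hz ↦
    convexHull_min (fun v hv ↦ (h v hv).2) (convex_halfSpace_le hf M) hz
  have hinf : m ≤ sInf (f '' convexHull ℝ s) := le_csInf hne <| forall_mem_image.2 fun _ hz ↦
    convexHull_min (fun v hv ↦ (h v hv).1) (convex_halfSpace_ge hf m) hz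
  linarith

def IsBoxInscribed (v₁ v₂ v₃ v₄ : ℝ × ℝ) : Prop :=
  ∀ v ∈ ({v₁, v₂, v₃, v₄} : Set (ℝ × ℝ)), v₄.1 ≤ v.1 ∧ v.1 ≤ v₃.1 ∧ v₂.2 ≤ v.2 ∧ v.2 ≤ v₁.2

namespace IsBoxInscribed

variable {v₁ v₂ v₃ v₄ : ℝ × ℝ}

lemma width_add_le (h : IsBoxInscribed v₁ v₂ v₃ v₄) :
    sSup ((fun z : ℝ × ℝ ↦ z.1 + z.2) '' convexHull ℝ {v₁, v₂, v₃, v₄}) -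
        sInf ((fun z : ℝ × ℝ ↦ z.1 + z.2) '' convexHull ℝ {v₁, v₂, v₃, v₄}) ≤
      max (v₁.1 + v₁.2) (v₃.1 + v₃.2) - min (v₂.1 + v₂.2) (v₄.1 + v₄.2) := by
  refine sSup_sub_sInf_image_convexHull_le (f := fun z : ℝ × ℝ ↦ z.1 + z.2) (insert_nonempty _ _)
    (LinearMap.fst ℝ ℝ ℝ + LinearMap.snd ℝ ℝ ℝ).isLinear fun v hv ↦ ?_
  have := h v₁ (by simp); have := h v₂ (by simp); have := h v₃ (by simp); have := h v₄ (by simp)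
  rcases hv with rfl | rfl | rfl | rfl <;> refine ⟨?_, ?_⟩ <;>
    simp only [min_le_iff, le_max_iff] <;> first | (left; linarith) | (right; linarith)

lemma width_sub_le (h : IsBoxInscribed v₁ v₂ v₃ v₄) :
    sSup ((fun z : ℝ × ℝ ↦ z.1 + -z.2) '' convexHull ℝ {v₁, v₂, v₃, v₄}) -
        sInf ((fun z : ℝ × ℝ ↦ z.1 + -z.2) '' convexHull ℝ {v₁, v₂, v₃, v₄}) ≤
      max (v₂.1 + -v₂.2) (v₃.1 + -v₃.2) - min (v₁.1 + -v₁.2) (v₄.1 + -v₄.2) := by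
  refine sSup_sub_sInf_image_convexHull_le (f := fun z : ℝ × ℝ ↦ z.1 + -z.2) (insert_nonempty _ _)
    (LinearMap.fst ℝ ℝ ℝ + -LinearMap.snd ℝ ℝ ℝ).isLinear fun v hv ↦ ?_
  have := h v₁ (by simp); have := h v₂ (by simp); have := h v₃ (by simp); have := h v₄ (by simp)
  rcases hv with rfl | rfl | rfl | rfl <;> refine ⟨?_, ?_⟩ <;>
    simp only [min_le_iff, le_max_iff] <;> first | (left; linarith) | (right; linarith)

end IsBoxInscribed

lemma shear_le_of_le_width_add {v₁ v₂ v₃ v₄ : ℝ × ℝ} (hx₄₁ : v₄.1 ≤ v₁.1) (hx₂₃ : v₂.1 ≤ v₃.1)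
    (hy₂₃ : v₂.2 ≤ v₃.2) (hy₄₁ : v₄.2 ≤ v₁.2) (hhw : v₁.2 - v₂.2 ≤ v₃.1 - v₄.1)
    (hx₁₂ : v₁.1 ≤ v₂.1) (hy₃₄ : v₃.2 ≤ v₄.2)
    (hw : v₃.1 - v₄.1 ≤ max (v₁.1 + v₁.2) (v₃.1 + v₃.2) - min (v₂.1 + v₂.2) (v₄.1 + v₄.2)) :
    (v₂.1 - v₁.1) * (v₄.2 - v₃.2) ≤ (v₁.2 - v₂.2) ^ 2 / 4 := by
  have amgm (t : ℝ) : (t - v₂.2) * (v₁.2 - t) ≤ (v₁.2 - v₂.2) ^ 2 / 4 := by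
    nlinarith [sq_nonneg (v₁.2 + v₂.2 - 2 * t)]
  have hshear := mul_nonneg (sub_nonneg.2 hx₁₂) (sub_nonneg.2 hy₃₄)
  rcases max_choice (v₁.1 + v₁.2) (v₃.1 + v₃.2) with hmax | hmax <;>
    rcases min_choice (v₂.1 + v₂.2) (v₄.1 + v₄.2) with hmin | hmin <;> rw [hmax, hmin] at hw
  · nlinarith [mul_nonneg (by linarith : 0 ≤ v₁.1 - v₂.1) (sub_nonneg.2 hy₃₄)]
  · nlinarith [amgm v₄.2, mul_le_mul (by linarith : v₂.1 - v₁.1 ≤ v₁.2 - v₄.2)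
      (by linarith : v₄.2 - v₃.2 ≤ v₄.2 - v₂.2) (sub_nonneg.2 hy₃₄) (sub_nonneg.2 hy₄₁)]
  · nlinarith [amgm v₃.2, mul_le_mul (by linarith : v₂.1 - v₁.1 ≤ v₃.2 - v₂.2)
      (by linarith : v₄.2 - v₃.2 ≤ v₁.2 - v₃.2) (sub_nonneg.2 hy₃₄) (sub_nonneg.2 hy₂₃)]
  · nlinarith [mul_nonneg (sub_nonneg.2 hx₁₂) (by linarith : 0 ≤ v₃.2 - v₄.2)]

lemma IsBoxInscribed.shear_le {v₁ v₂ v₃ v₄ : ℝ × ℝ} (h : IsBoxInscribed v₁ v₂ v₃ v₄)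
    (hhw : v₁.2 - v₂.2 ≤ v₃.1 - v₄.1)
    (hw_add : v₃.1 - v₄.1 ≤ max (v₁.1 + v₁.2) (v₃.1 + v₃.2) - min (v₂.1 + v₂.2) (v₄.1 + v₄.2))
    (hw_sub :
      v₃.1 - v₄.1 ≤ max (v₂.1 + -v₂.2) (v₃.1 + -v₃.2) - min (v₁.1 + -v₁.2) (v₄.1 + -v₄.2)) :
    (v₂.1 - v₁.1) * (v₄.2 - v₃.2) ≤ (v₁.2 - v₂.2) ^ 2 / 4 := by
  obtain ⟨hx₄₁, hx₁₃, -, -⟩ := h v₁ (by simp)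
  obtain ⟨hx₄₂, hx₂₃, -, -⟩ := h v₂ (by simp)
  obtain ⟨-, -, hy₂₃, hy₃₁⟩ := h v₃ (by simp)
  obtain ⟨-, -, hy₂₄, hy₄₁⟩ := h v₄ (by simp)
  have hsq := sq_nonneg (v₁.2 - v₂.2)
  rcases le_total v₁.1 v₂.1 with hx₁₂ | hx₂₁ <;> rcases le_total v₃.2 v₄.2 with hy₃₄ | hy₄₃
  · exact shear_le_of_le_width_add hx₄₁ hx₂₃ hy₂₃ hy₄₁ hhw hx₁₂ hy₃₄ hw_add
  · nlinarith [mul_nonneg (sub_nonneg.2 hx₁₂) (sub_nonneg.2 hy₄₃)]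
  · nlinarith [mul_nonneg (sub_nonneg.2 hx₂₁) (sub_nonneg.2 hy₃₄)]
  · have := shear_le_of_le_width_add (v₁ := (v₂.1, -v₂.2)) (v₂ := (v₁.1, -v₁.2))
      (v₃ := (v₃.1, -v₃.2)) (v₄ := (v₄.1, -v₄.2)) hx₄₂ hx₁₃ (neg_le_neg hy₃₁) (neg_le_neg hy₂₄)
      (by dsimp only; linarith) hx₂₁ (neg_le_neg hy₄₃) hw_sub
    convert this using 1 <;> ring

theorem stmt_5_general (K : Set (ℝ × ℝ))
    (q q' : ℝ)
    (hq : dirWidth K (0, 1) = q)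
    (hq' : dirWidth K (1, 0) = q')
    (hq'q : q ≤ q')
    (h11 : dirWidth K (1, 1) ≥ q')
    (h1m1 : dirWidth K (1, -1) ≥ q')
    (hquad : ∃ v₁ v₂ v₃ v₄ : ℝ × ℝ,
      K = convexHull ℝ {v₁, v₂, v₃, v₄} ∧
      v₁.2 = sSup (Prod.snd '' K) ∧
      v₂.2 = sInf (Prod.snd '' K) ∧
      v₃.1 = sSup (Prod.fst '' K) ∧
      v₄.1 = sInf (Prod.fst '' K)) :
    2 * (volume K).toReal ≥ 3 / 4 * q ^ 2 := by
  obtain ⟨v₁, v₂, v₃, v₄, rfl, hv₁, hv₂, hv₃, hv₄⟩ := hquad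
  have hK := (toFinite {v₁, v₂, v₃, v₄}).isCompact_convexHull ℝ
  have hbox : IsBoxInscribed v₁ v₂ v₃ v₄ := fun v hv ↦ by
    have hv (f : ℝ × ℝ → ℝ) := mem_image_of_mem f (subset_convexHull ℝ _ hv)
    rw [hv₁, hv₂, hv₃, hv₄]
    exact ⟨csInf_le (hK.bddBelow_image continuous_fst.continuousOn) (hv Prod.fst),
      le_csSup (hK.bddAbove_image continuous_fst.continuousOn) (hv Prod.fst),
      csInf_le (hK.bddBelow_image continuous_snd.continuousOn) (hv Prod.snd),
      le_csSup (hK.bddAbove_image continuous_snd.continuousOn) (hv Prod.snd)⟩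
  simp only [dirWidth, Int.cast_zero, Int.cast_one, Int.cast_neg, zero_mul, one_mul, neg_mul,
    zero_add, add_zero] at hq hq' h11 h1m1
  rw [← hv₁, ← hv₂] at hq
  rw [← hv₃, ← hv₄] at hq'
  subst hq hq'
  have hshear := hbox.shear_le hq'q (h11.trans hbox.width_add_le) (h1m1.trans hbox.width_sub_le)
  have harea := cross_add_cross_le_two_mul_volume_convexHull v₁ v₂ v₃ v₄
  have hshoelace : cross (v₂ - v₄) (v₃ - v₄) + cross (v₃ - v₄) (v₁ - v₄) =
      (v₁.2 - v₂.2) * (v₃.1 - v₄.1) - (v₂.1 - v₁.1) * (v₄.2 - v₃.2) := by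
    simp only [cross, Prod.fst_sub, Prod.snd_sub]; ring
  have hheight : 0 ≤ v₁.2 - v₂.2 := by linarith [(hbox v₁ (by simp)).2.2.1]
  nlinarith [mul_le_mul_of_nonneg_left hq'q hheight]

/-- Let `K` be a lattice polygon whose lattice width `q` is attained in the vertical
direction, with horizontal width `q' ≥ q`, satisfying `d(K,(1,1)) ≥ q'` and
`d(K,(1,-1)) ≥ q'`.  If `K` is a quadrilateral whose four vertices lie on the four
supporting lines in the directions `(0,±1)` and `(±1,0)`, then `2·Area(K) ≥ (3/4)q²`. -/
theorem stmt_5 (K : Set (ℝ × ℝ)) (V : Finset (ℤ × ℤ))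
    (hK : K = convexHull ℝ ((fun p : ℤ × ℤ => ((p.1 : ℝ), (p.2 : ℝ))) '' ↑V))
    (hne : K.Nonempty)
    (q q' : ℝ)
    (hq : dirWidth K (0, 1) = q)
    (hqmin : ∀ v : ℤ × ℤ, IsPrimitiveVec v → q ≤ dirWidth K v)
    (hq' : dirWidth K (1, 0) = q')
    (hq'q : q ≤ q')
    (h11 : dirWidth K (1, 1) ≥ q')
    (h1m1 : dirWidth K (1, -1) ≥ q')
    (hquad : ∃ v₁ v₂ v₃ v₄ : ℝ × ℝ,
      K = convexHull ℝ {v₁, v₂, v₃, v₄} ∧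
      v₁.2 = sSup (Prod.snd '' K) ∧
      v₂.2 = sInf (Prod.snd '' K) ∧
      v₃.1 = sSup (Prod.fst '' K) ∧
      v₄.1 = sInf (Prod.fst '' K)) :
    2 * (volume K).toReal ≥ 3 / 4 * q ^ 2 :=
  stmt_5_general K q q' hq hq' hq'q h11 h1m1 hquad
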